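/- arXiv:math/0510274 — 2 statements merged into one kernel-verified Lean document; each statement's English description precedes it below -/
import Mathlib

section
/- Let (R,m) be a commutative Noetherian local ring, let a be an ideal of R with dim R/a = 1, and let M and N be finitely generated R-modules. Then the set Ass_R(H_a^t(M,N)) is finite for every integer t ≥ 0. -/
/-!
Generalized local cohomology `H_a^i(M, N) = colim_n Ext_R^i(M ⧸ a^n M, N)`,
following the design of `Mathlib.Algebra.Homology.LocalCohomology`.
-/

open CategoryTheory CategoryTheory.Limits Opposite

noncomputable section

universe u

variable {R : Type u} [CommRing R]

/-- The directed system of quotients of `M` by a decreasing family of submodules,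
indexed by `ℕᵒᵖ`. -/
def quotDiagram (M : ModuleCat.{u} R) (p : ℕ → Submodule R M)
    (hp : ∀ a b : ℕ, a ≤ b → p b ≤ p a) : ℕᵒᵖ ⥤ ModuleCat.{u} R where
  obj t := ModuleCat.of R (M ⧸ p (unop t))
  map w := ModuleCat.ofHom (Submodule.mapQ _ _ LinearMap.id (hp _ _ w.unop.down.down))
  map_id _ := by apply ModuleCat.hom_ext; apply Submodule.linearMap_qext; rfl
  map_comp _ _ := by apply ModuleCat.hom_ext; apply Submodule.linearMap_qext; rfl

/-- The directed system of quotients `M ⧸ J^n • M`, indexed by `ℕᵒᵖ`. -/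
def quotIdealPowerSMulDiagram (J : Ideal R) (M : ModuleCat.{u} R) : ℕᵒᵖ ⥤ ModuleCat.{u} R :=
  quotDiagram M (fun n => J ^ n • ⊤)
    (fun _ _ h => Submodule.smul_mono_left (Ideal.pow_le_pow_right h))

/-- The diagram `n ↦ Ext^i (M ⧸ J^n • M) N` whose colimit is the `i`-th generalized
local cohomology of `(M, N)` with respect to `J`. -/
def generalizedLocalCohomology.diagram (J : Ideal R) (i : ℕ) (M N : ModuleCat.{u} R) :
    ℕᵒᵖᵒᵖ ⥤ ModuleCat.{u} R :=
  (quotIdealPowerSMulDiagram J M).op ⋙ (Ext R (ModuleCat.{u} R) i).flip.obj N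

instance (J : Ideal R) (i : ℕ) (M N : ModuleCat.{u} R) :
    HasColimit (generalizedLocalCohomology.diagram J i M N) := by
  have : HasColimitsOfShape ℕᵒᵖᵒᵖ (AddCommGrpMax.{u, 0}) := inferInstance
  infer_instance

/-- The `i`-th generalized local cohomology module `H_J^i(M, N)`, defined as the direct
limit of `Ext^i(M ⧸ J^n • M, N)` over the powers `J^n` of `J`. -/
def generalizedLocalCohomology (J : Ideal R) (i : ℕ) (M N : ModuleCat.{u} R) :
    ModuleCat.{u} R :=
  colimit (generalizedLocalCohomology.diagram J i M N)

/-!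
Every element of `Ext^t(M ⧸ a^n M, N)` is killed by `a^n`, because `Ext` is `R`-linear in its
first argument: multiplication by `r ∈ a^n` on a projective resolution lifts the zero map, hence
is null-homotopic, and so induces zero on the homology of `Hom(P, N)`. Passing to the colimit,
every element of `H_a^t(M, N)` is killed by a power of `a`, so every associated prime contains
`a`. When `dim R/a ≤ 1`, a prime containing `a` is either minimal over `a` or the maximal ideal,
and a Noetherian ring has only finitely many primes minimal over `a`.
-/

namespace HomologicalComplex

variable {S : Type*} [Semiring S] {C : Type*} [Category C] [Preadditive C] [Linear S C]
  {ι : Type*} {c : ComplexShape ι} {K L : HomologicalComplex C c}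

lemma homologyMap_smul (f : K ⟶ L) (r : S) (i : ι) [K.HasHomology i] [L.HasHomology i] :
    homologyMap (r • f) i = r • homologyMap f i :=
  ShortComplex.homologyMap_smul ((shortComplexFunctor C c i).map f) r

end HomologicalComplex

lemma Ext.smul_eq_zero_of_mem_annihilator {A : ModuleCat.{u} R} {r : R}
    (hr : r ∈ Module.annihilator R A) {t : ℕ} (N : ModuleCat.{u} R)
    (x : ((Ext R (ModuleCat.{u} R) t).obj (op A)).obj N) : r • x = 0 := by
  obtain ⟨P⟩ : Nonempty (ProjectiveResolution A) := HasProjectiveResolution.out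
  let F := ((linearYoneda R (ModuleCat.{u} R)).obj N).rightOp
  have hπ : (r • 𝟙 P.complex) ≫ P.π = 0 := by
    apply HomologicalComplex.to_single_hom_ext
    ext a
    simp only [HomologicalComplex.smul_f_apply, Linear.smul_comp, Category.id_comp]
    exact Module.mem_annihilator.1 hr _
  let hnull := (F.mapHomotopy (P.liftHomotopyZero _ hπ)).unop
  have hmap_smul : (HomologicalComplex.unopFunctor _ _).map
      ((F.mapHomologicalComplex _).map (r • 𝟙 P.complex)).op =
      r • 𝟙 (P.complex.linearYonedaObj R N) := by
    ext i g
    exact (Linear.smul_comp _ _ _ r (𝟙 (P.complex.X i)) (show P.complex.X i ⟶ N from g)).trans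
      (congrArg (r • ·) (Category.id_comp _))
  have hzero : r • 𝟙 ((P.complex.linearYonedaObj R N).homology t) = 0 := by
    rw [← HomologicalComplex.homologyMap_id, ← HomologicalComplex.homologyMap_smul, ← hmap_smul]
    refine (hnull.homologyMap_eq t).trans ?_
    simp only [Functor.map_zero, op_zero, HomologicalComplex.homologyMap_zero]
    rfl
  have hy (y : (P.complex.linearYonedaObj R N).homology t) : r • y = 0 :=
    congrArg (fun f => f.hom y) hzero
  let e := (P.isoExt (R := R) t N).toLinearEquiv
  rw [← e.symm_apply_apply x, ← map_smul, hy, map_zero]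

lemma generalizedLocalCohomology.exists_pow_le_colon (J : Ideal R) (i : ℕ)
    (M N : ModuleCat.{u} R) (x : generalizedLocalCohomology J i M N) :
    ∃ n : ℕ, J ^ n ≤ (⊥ : Submodule R _).colon {x} := by
  have := preservesSmallestFilteredColimits_of_preservesFilteredColimits (forget (ModuleCat.{u} R))
  obtain ⟨j, y, rfl⟩ := Concrete.colimit_exists_rep (diagram J i M N) x
  refine ⟨unop (unop j), fun r hr => ?_⟩
  have hann : r ∈ Module.annihilator R (M ⧸ (J ^ unop (unop j) • ⊤ : Submodule R M)) :=
    (Module.isTorsionBySet_iff_subset_annihilator _ _).1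
      (Module.isTorsionBySet_quotient_ideal_smul M _) hr
  refine Submodule.mem_colon_singleton.2 ((Submodule.mem_bot R).2 ?_)
  have hy : r • y = 0 := Ext.smul_eq_zero_of_mem_annihilator hann N y
  exact (map_smul _ r y).symm.trans ((congrArg _ hy).trans (map_zero _))

lemma le_of_mem_associatedPrimes {X : Type*} [AddCommGroup X] [Module R X] {a p : Ideal R}
    (htors : ∀ x : X, ∃ n : ℕ, a ^ n ≤ (⊥ : Submodule R X).colon {x})
    (hp : p ∈ associatedPrimes R X) : a ≤ p := by
  obtain ⟨hprime, x, rfl⟩ := hp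
  obtain ⟨n, hn⟩ := htors x
  exact hprime.le_of_pow_le (hn.trans Ideal.le_radical)

lemma Ideal.mem_minimalPrimes_or_isMaximal_of_ringKrullDim_quotient_le_one {a p : Ideal R}
    (hdim : ringKrullDim (R ⧸ a) ≤ 1) [p.IsPrime] (hap : a ≤ p) :
    p ∈ a.minimalPrimes ∨ p.IsMaximal := by
  have : Ring.KrullDimLE 1 (R ⧸ a) := (Order.krullDimLE_iff _ _).2 (mod_cast hdim)
  have hP : (p.map (Quotient.mk a)).IsPrime :=
    map_isPrime_of_surjective Quotient.mk_surjective (by rwa [mk_ker])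
  rcases Ring.krullDimLE_one_iff.1 this _ hP with hmin | hmax
  · left
    rw [minimalPrimes_eq_comap]
    exact ⟨_, hmin, comap_map_mk hap⟩
  · right
    rw [← comap_map_mk hap]
    exact comap_isMaximal_of_surjective _ Quotient.mk_surjective

lemma Ideal.finite_setOf_isPrime_le_of_ringKrullDim_quotient_le_one [IsNoetherianRing R]
    [IsLocalRing R] {a : Ideal R} (hdim : ringKrullDim (R ⧸ a) ≤ 1) :
    {p : Ideal R | p.IsPrime ∧ a ≤ p}.Finite := by
  refine ((finite_minimalPrimes_of_isNoetherianRing R a).insert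
    (IsLocalRing.maximalIdeal R)).subset ?_
  rintro p ⟨hp, hap⟩
  rcases mem_minimalPrimes_or_isMaximal_of_ringKrullDim_quotient_le_one hdim hap with hmin | hmax
  · exact Or.inr hmin
  · exact Or.inl (IsLocalRing.eq_maximalIdeal hmax)

theorem ass_generalizedLocalCohomology_finite_of_dim_quotient_eq_one_general
    [IsNoetherianRing R] [IsLocalRing R] (a : Ideal R)
    (hdim : ringKrullDim (R ⧸ a) = 1)
    (M N : ModuleCat.{u} R) (t : ℕ) :
    (associatedPrimes R (generalizedLocalCohomology a t M N)).Finite :=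
  (Ideal.finite_setOf_isPrime_le_of_ringKrullDim_quotient_le_one hdim.le).subset fun _ hp =>
    ⟨hp.1, le_of_mem_associatedPrimes
      (generalizedLocalCohomology.exists_pow_le_colon a t M N) hp⟩

theorem ass_generalizedLocalCohomology_finite_of_dim_quotient_eq_one
    [IsNoetherianRing R] [IsLocalRing R] (a : Ideal R)
    (hdim : ringKrullDim (R ⧸ a) = 1)
    (M N : ModuleCat.{u} R) [Module.Finite R M] [Module.Finite R N] (t : ℕ) :
    (associatedPrimes R (generalizedLocalCohomology a t M N)).Finite :=
  ass_generalizedLocalCohomology_finite_of_dim_quotient_eq_one_general a hdim M N t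

end
end

section
/- Let R be a commutative Noetherian ring with identity, let a be an ideal of R, let N be a finitely generated R-module, and let x_1, ..., x_n be an a-filter regular sequence on N. Then there exists an element y ∈ a such that x_1, ..., x_n, y is an a-filter regular sequence on N. -/
/-!
With `M = N ⧸ (x₁, …, xₙ)N`, the new condition asks for `y ∈ a` with `Supp (0 :_M y) ⊆ V(a)`.
By prime avoidance, `a` is not covered by the finitely many associated primes of `M` not
containing `a`; pick `y ∈ a` outside all of them. An associated prime of `(0 :_M y)` is an
associated prime of `M` containing `y`, hence contains `a`; since every prime of the support
of a finite module contains an associated prime, `Supp (0 :_M y) ⊆ V(a)`.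
-/

universe u

variable {R : Type u} [CommRing R]

/-- `x 0, ..., x (n-1)` is an `a`-filter regular sequence on `N`: each `x i` lies in `a`,
and the support of `((x 0, ..., x (i-1)) N :_N x i) ⧸ (x 0, ..., x (i-1)) N` is contained
in `V(a)`, the set of primes containing `a`. -/
def IsFilterRegularSequence (a : Ideal R) (N : Type u) [AddCommGroup N] [Module R N]
    {n : ℕ} (x : Fin n → R) : Prop :=
  (∀ i, x i ∈ a) ∧
  ∀ i : Fin n,
    Module.support R
      ↥((Submodule.comap (LinearMap.lsmul R N (x i))
            (Ideal.span (x '' {j | j < i}) • (⊤ : Submodule R N))).map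
          (Ideal.span (x '' {j | j < i}) • (⊤ : Submodule R N)).mkQ)
      ⊆ PrimeSpectrum.zeroLocus (a : Set R)

section AssociatedPrimes

variable [IsNoetherianRing R] {M : Type*} [AddCommGroup M] [Module R M] [Module.Finite R M]

theorem Module.exists_mem_associatedPrimes_le_of_mem_support {p : PrimeSpectrum R}
    (hp : p ∈ Module.support R M) : ∃ q ∈ associatedPrimes R M, q ≤ p.asIdeal := by
  rw [Module.support_eq_zeroLocus, PrimeSpectrum.mem_zeroLocus, SetLike.coe_subset_coe] at hp
  obtain ⟨q, hq, hqp⟩ := Ideal.exists_minimalPrimes_le hp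
  exact ⟨q, Module.associatedPrimes.minimalPrimes_annihilator_subset_associatedPrimes R M hq, hqp⟩

variable (M) in
theorem exists_mem_forall_mem_associatedPrimes_le_of_mem (a : Ideal R) :
    ∃ y ∈ a, ∀ p ∈ associatedPrimes R M, y ∈ p → a ≤ p := by
  have hfin : {p ∈ associatedPrimes R M | ¬a ≤ p}.Finite :=
    (associatedPrimes.finite R M).subset fun _ hp ↦ hp.1
  have hnot : ¬(a : Set R) ⊆ ⋃ p ∈ {p ∈ associatedPrimes R M | ¬a ≤ p}, (p : Set R) := by
    intro h
    obtain ⟨p, hp, hap⟩ :=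
      (Ideal.subset_union_prime_finite (f := id) hfin ⊥ ⊥ fun p hp _ _ ↦ hp.1.isPrime).mp h
    exact hp.2 hap
  obtain ⟨y, hya, hy⟩ := Set.not_subset.mp hnot
  simp only [Set.mem_iUnion, not_exists] at hy
  exact ⟨y, hya, fun p hp hyp ↦ by_contra fun hap ↦ hy p ⟨hp, hap⟩ hyp⟩

variable (M) in
theorem exists_mem_support_ker_lsmul_subset_zeroLocus (a : Ideal R) :
    ∃ y ∈ a, Module.support R (LinearMap.ker (LinearMap.lsmul R M y)) ⊆
      PrimeSpectrum.zeroLocus (a : Set R) := by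
  obtain ⟨y, hya, hy⟩ := exists_mem_forall_mem_associatedPrimes_le_of_mem M a
  refine ⟨y, hya, fun p hp ↦ ?_⟩
  obtain ⟨q, hq, hqp⟩ := Module.exists_mem_associatedPrimes_le_of_mem_support hp
  have hyq : y ∈ q := hq.annihilator_le <| Submodule.mem_annihilator.mpr fun m _ ↦
    Subtype.ext (LinearMap.mem_ker.mp m.2)
  have hqM : q ∈ associatedPrimes R M :=
    associatedPrimes.subset_of_injective (Submodule.injective_subtype _) hq
  exact (hy q hqM hyq).trans hqp

end AssociatedPrimes

theorem Submodule.map_mkQ_comap_lsmul {M : Type*} [AddCommGroup M] [Module R M]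
    (W : Submodule R M) (y : R) :
    (W.comap (LinearMap.lsmul R M y)).map W.mkQ = LinearMap.ker (LinearMap.lsmul R (M ⧸ W) y) := by
  ext m
  induction m using Submodule.Quotient.induction_on with | _ m => ?_
  simp only [LinearMap.mem_ker, LinearMap.lsmul_apply, ← Submodule.Quotient.mk_smul,
    Submodule.Quotient.mk_eq_zero]
  have hW : W ≤ W.comap (LinearMap.lsmul R M y) := fun w hw ↦ W.smul_mem y hw
  rw [← Submodule.mkQ_apply, ← Submodule.mem_comap, Submodule.comap_map_mkQ, sup_eq_right.mpr hW]
  rfl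

theorem Fin.snoc_image_Iio_castSucc {α : Type*} {n : ℕ} (x : Fin n → α) (y : α) (i : Fin n) :
    (Fin.snoc x y : Fin (n + 1) → α) '' Set.Iio i.castSucc = x '' Set.Iio i := by
  rw [← Fin.image_castSucc_Iio, Set.image_image]
  simp only [Fin.snoc_castSucc]

theorem Fin.snoc_image_Iio_last {α : Type*} {n : ℕ} (x : Fin n → α) (y : α) :
    (Fin.snoc x y : Fin (n + 1) → α) '' Set.Iio (Fin.last n) = Set.range x := by
  have hIio : Set.Iio (Fin.last n) = Set.range Fin.castSucc := by
    ext j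
    simp only [Set.mem_Iio, Set.mem_range, Fin.exists_castSucc_eq, Fin.lt_last_iff_ne_last]
  rw [hIio, ← Set.range_comp]
  simp only [Fin.snoc_comp_castSucc]

theorem IsFilterRegularSequence.snoc {a : Ideal R} {N : Type u} [AddCommGroup N] [Module R N]
    {n : ℕ} {x : Fin n → R} {y : R} (hx : IsFilterRegularSequence a N x) (hy : y ∈ a)
    (hsupp : Module.support R (LinearMap.ker (LinearMap.lsmul R
        (N ⧸ Ideal.span (Set.range x) • (⊤ : Submodule R N)) y)) ⊆
      PrimeSpectrum.zeroLocus (a : Set R)) :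
    IsFilterRegularSequence a N (Fin.snoc x y : Fin (n + 1) → R) := by
  refine ⟨Fin.lastCases (by simpa using hy) fun i ↦ by simpa using hx.1 i, Fin.lastCases ?_ ?_⟩
  · rw [Fin.snoc_last, Set.Iio_def, Fin.snoc_image_Iio_last, Submodule.map_mkQ_comap_lsmul]
    exact hsupp
  · intro i
    rw [Fin.snoc_castSucc, Set.Iio_def, Fin.snoc_image_Iio_castSucc]
    exact hx.2 i

theorem exists_extend_filterRegularSequence
    [IsNoetherianRing R] (a : Ideal R) (N : Type u) [AddCommGroup N] [Module R N]
    [Module.Finite R N] {n : ℕ} (x : Fin n → R)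
    (hx : IsFilterRegularSequence a N x) :
    ∃ y ∈ a, IsFilterRegularSequence a N (Fin.snoc x y) := by
  obtain ⟨y, hy, hsupp⟩ := exists_mem_support_ker_lsmul_subset_zeroLocus
    (N ⧸ Ideal.span (Set.range x) • (⊤ : Submodule R N)) a
  exact ⟨y, hy, hx.snoc hy hsupp⟩
end
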